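/- Two Gaussian generating functions of the form G(z) = ∏_i [λ'_i/(λ'_i+z/2)]^{k_i/2} e^{-z d_i² λ'_i/(2(λ'_i+z/2))} (with distinct λ'_i > 0, k_i ∈ ℕ₊, d_i ≥ 0) agreeing on a neighborhood of 0 must have identical parameter families {(λ'_i, k_i, d_i)}. -/

import Mathlib

/-!
In the variable `w = z/2`, near `0`, `log G` is
`∑ i, (k_i/2) (log λ'_i - log (λ'_i + w)) - w d_i² λ'_i / (λ'_i + w)`, whose derivative is the
rational function `-∑ i, (k_i/2) / (λ'_i + w) + d_i² λ'_i² / (λ'_i + w)²`. A sum of simple and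
double poles determines its poles and coefficients: clearing denominators turns two such sums
agreeing on an infinite set into one polynomial with infinitely many roots, and evaluating it at a
pole isolates that pole's coefficient. Recording the coefficients as `extend λ' c 0`, a function
vanishing off the poles, both families give the same function; since `k_i > 0` every `λ'_i` is a
genuine pole, so the poles match, and `(k_i/2, d_i² λ'_i²)` gives back `k_i` and `d_i ≥ 0`.
-/

open Real BigOperators

noncomputable def Gfun {N : ℕ} (lam : Fin N → ℝ) (k : Fin N → ℕ)
    (d : Fin N → ℝ) (z : ℝ) : ℝ :=
  ∏ i, (lam i / (lam i + z/2)) ^ ((k i : ℝ) / 2) *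
    Real.exp (-(z * (d i)^2 * lam i) / (2 * (lam i + z/2)))

open Polynomial Filter Topology Function

section PartialFractions

variable {K : Type*} [Field K] [DecidableEq K]

theorem eval_neg_eq_zero_of_sum_eval_div_pow_eq_zero {s : Finset K} {P : K → K[X]} {m : ℕ}
    (hm : m ≠ 0) {S : Set K} (hS : S.Infinite)
    (h : ∀ w ∈ S, ∑ t ∈ s, (P t).eval w / (t + w) ^ m = 0) {t : K} (ht : t ∈ s) :
    (P t).eval (-t) = 0 := by
  set q : K[X] := ∑ t ∈ s, P t * ∏ u ∈ s.erase t, (C u + X) ^ m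
  have hq_eval : ∀ z, q.eval z = ∑ t ∈ s, (P t).eval z * ∏ u ∈ s.erase t, (u + z) ^ m := by
    intro z
    simp [q, eval_finsetSum, eval_prod]
  have hq : q = 0 := by
    refine eq_zero_of_infinite_isRoot q ((hS.sdiff (s.image Neg.neg).finite_toSet).mono ?_)
    rintro w ⟨hwS, hw⟩
    have hpole : ∀ u ∈ s, u + w ≠ 0 := fun u hu hu0 =>
      hw (Finset.mem_coe.2 (Finset.mem_image.2 ⟨u, hu, by linear_combination -hu0⟩))
    have hterm : ∀ t ∈ s, (P t).eval w * ∏ u ∈ s.erase t, (u + w) ^ m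
        = (P t).eval w / (t + w) ^ m * ∏ u ∈ s, (u + w) ^ m := by
      intro t ht
      rw [← Finset.prod_erase_mul s _ ht]
      field_simp [pow_ne_zero m (hpole t ht)]
    show q.eval w = 0
    rw [hq_eval, Finset.sum_congr rfl hterm, ← Finset.sum_mul, h w hwS, zero_mul]
  have hq_neg := hq_eval (-t)
  rw [hq, eval_zero, Finset.sum_eq_single_of_mem t ht fun b _ hbt => mul_eq_zero_of_right _
    (Finset.prod_eq_zero (Finset.mem_erase.2 ⟨Ne.symm hbt, ht⟩) (by simp [hm]))] at hq_neg
  refine (mul_eq_zero.1 hq_neg.symm).resolve_right (Finset.prod_ne_zero_iff.2 fun u hu => ?_)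
  rw [← sub_eq_add_neg]
  exact pow_ne_zero m (sub_ne_zero.2 (Finset.ne_of_mem_erase hu))

theorem eq_of_sum_div_add_div_sq_eq {s : Finset K} {c c' : K → K × K} {S : Set K}
    (hS : S.Infinite)
    (h : ∀ w ∈ S, ∑ t ∈ s, ((c t).1 / (t + w) + (c t).2 / (t + w) ^ 2)
      = ∑ t ∈ s, ((c' t).1 / (t + w) + (c' t).2 / (t + w) ^ 2)) {t : K} (ht : t ∈ s) :
    c t = c' t := by
  set e := fun t => c t - c' t
  -- also true at `x = 0`, where both sides are junk zeros
  have hcombine : ∀ a b x : K, a / x + b / x ^ 2 = (b + a * x) / x ^ 2 := by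
    intro a b x
    rcases eq_or_ne x 0 with rfl | hx
    · simp
    · field_simp
      ring
  have he : ∀ w ∈ S, ∑ t ∈ s, ((e t).2 + (e t).1 * (t + w)) / (t + w) ^ 2 = 0 := by
    intro w hw
    simp only [e, Prod.fst_sub, Prod.snd_sub, ← hcombine, sub_div, Finset.sum_sub_distrib,
      sub_add_sub_comm, h w hw, sub_self]
  have he₂ : ∀ t ∈ s, (e t).2 = 0 := by
    intro t ht
    have hP := eval_neg_eq_zero_of_sum_eval_div_pow_eq_zero
      (P := fun t => C (e t).2 + C (e t).1 * (C t + X)) two_ne_zero hS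
      (fun w hw => by simpa using he w hw) ht
    simpa using hP
  have he₁ : ∀ t ∈ s, (e t).1 = 0 := by
    intro t ht
    have hsum : ∀ w ∈ S, ∑ u ∈ s, (C (e u).1).eval w / (u + w) ^ 1 = 0 := by
      intro w hw
      rw [← he w hw]
      refine Finset.sum_congr rfl fun u hu => ?_
      rw [eval_C, pow_one, ← hcombine, he₂ u hu, zero_div, add_zero]
    simpa using eval_neg_eq_zero_of_sum_eval_div_pow_eq_zero one_ne_zero hS hsum ht
  exact sub_eq_zero.1 (Prod.ext (he₁ t ht) (he₂ t ht))

end PartialFractions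

theorem Function.Injective.sum_eq_sum_extend {ι α β M : Type*} [Fintype ι] [DecidableEq α]
    [Zero β] [AddCommMonoid M] {f : ι → α} (hf : Injective f) {s : Finset α}
    (hs : ∀ i, f i ∈ s) (c : ι → β) (F : α → β → M) (hF : ∀ a, F a 0 = 0) :
    ∑ i, F (f i) (c i) = ∑ a ∈ s, F a (extend f c 0 a) := by
  rw [← Finset.sum_subset (s₁ := Finset.univ.image f) (by simpa [Finset.subset_iff] using hs),
    Finset.sum_image fun i _ j _ hij => hf hij]
  · simp only [hf.extend_apply]
  · intro a _ ha
    rw [extend_apply' _ _ _ (by simpa using ha), Pi.zero_apply, hF]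

theorem exists_equiv_of_extend_eq {ι κ α β : Type*} [Zero β] {f : ι → α} {g : κ → α}
    (hf : Injective f) (hg : Injective g) {c : ι → β} {c' : κ → β} (hc : ∀ i, c i ≠ 0)
    (hc' : ∀ j, c' j ≠ 0) (h : extend f c 0 = extend g c' 0) :
    ∃ σ : ι ≃ κ, ∀ i, g (σ i) = f i ∧ c' (σ i) = c i := by
  have hrange : Set.range f = Set.range g := by
    refine Set.Subset.antisymm ?_ ?_
    · rintro _ ⟨i, rfl⟩
      by_contra hi
      exact hc i (by rw [← hf.extend_apply c 0, h, extend_apply' _ _ _ hi, Pi.zero_apply])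
    · rintro _ ⟨j, rfl⟩
      by_contra hj
      exact hc' j (by rw [← hg.extend_apply c' 0, ← h, extend_apply' _ _ _ hj, Pi.zero_apply])
  let σ := (Equiv.ofInjective f hf).trans
    ((Equiv.setCongr hrange).trans (Equiv.ofInjective g hg).symm)
  have hσ : ∀ i, g (σ i) = f i := fun i => Equiv.apply_ofInjective_symm hg _
  refine ⟨σ, fun i => ⟨hσ i, ?_⟩⟩
  rw [← hg.extend_apply c' 0, hσ, ← h, hf.extend_apply]

theorem extend_eq_of_eventually_sum_div_add_div_sq_eq {𝕜 ι κ : Type*}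
    [NontriviallyNormedField 𝕜] [Fintype ι] [Fintype κ] {f : ι → 𝕜} {g : κ → 𝕜}
    (hf : Injective f) (hg : Injective g) {c : ι → 𝕜 × 𝕜} {c' : κ → 𝕜 × 𝕜} {x : 𝕜}
    (h : ∀ᶠ w in 𝓝 x, ∑ i, ((c i).1 / (f i + w) + (c i).2 / (f i + w) ^ 2)
      = ∑ j, ((c' j).1 / (g j + w) + (c' j).2 / (g j + w) ^ 2)) :
    extend f c 0 = extend g c' 0 := by
  classical
  set s := Finset.univ.image f ∪ Finset.univ.image g
  have hfs : ∀ i, f i ∈ s := fun i => Finset.mem_union_left _ (by simp)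
  have hgs : ∀ j, g j ∈ s := fun j => Finset.mem_union_right _ (by simp)
  funext t
  by_cases ht : t ∈ s
  · refine eq_of_sum_div_add_div_sq_eq (infinite_of_mem_nhds x h) (fun w hw => ?_) ht
    have hf_sum := hf.sum_eq_sum_extend hfs c
      (fun a p => p.1 / (a + w) + p.2 / (a + w) ^ 2) (by simp)
    have hg_sum := hg.sum_eq_sum_extend hgs c'
      (fun a p => p.1 / (a + w) + p.2 / (a + w) ^ 2) (by simp)
    exact hf_sum.symm.trans (hw.trans hg_sum)
  · rw [extend_apply' _ _ _ fun ⟨i, hi⟩ => ht (hi ▸ hfs i),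
      extend_apply' _ _ _ fun ⟨j, hj⟩ => ht (hj ▸ hgs j)]

theorem eventually_forall_pos_add {ι : Type*} [Finite ι] {lam : ι → ℝ}
    (hlam : ∀ i, 0 < lam i) :
    ∀ᶠ w in 𝓝 (0 : ℝ), ∀ i, 0 < lam i + w :=
  eventually_all.2 fun i =>
    ((continuous_const.add continuous_id).tendsto' 0 (lam i) (by simp)).eventually
      (lt_mem_nhds (hlam i))

section GaussianGeneratingFunction

variable {N : ℕ} {lam : Fin N → ℝ} {k : Fin N → ℕ} {d : Fin N → ℝ} {w : ℝ}

noncomputable def logG (lam : Fin N → ℝ) (k : Fin N → ℕ) (d : Fin N → ℝ) (w : ℝ) : ℝ :=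
  ∑ i, ((k i : ℝ) / 2 * (log (lam i) - log (lam i + w)) - w * d i ^ 2 * lam i / (lam i + w))

noncomputable def poleCoeff (lam : ℝ) (k : ℕ) (d : ℝ) : ℝ × ℝ := ((k : ℝ) / 2, d ^ 2 * lam ^ 2)

theorem poleCoeff_ne_zero {lam : ℝ} {k : ℕ} (hk : 0 < k) (d : ℝ) : poleCoeff lam k d ≠ 0 :=
  fun h => by simpa [poleCoeff, hk.ne'] using congrArg Prod.fst h

theorem poleCoeff_inj {lam d d' : ℝ} {k k' : ℕ} (hlam : lam ≠ 0) (hd : 0 ≤ d) (hd' : 0 ≤ d') :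
    poleCoeff lam k d = poleCoeff lam k' d' ↔ k = k' ∧ d = d' := by
  simp [poleCoeff, hlam, sq_eq_sq₀ hd hd']

theorem log_Gfun_two_mul (hlam : ∀ i, 0 < lam i) (hw : ∀ i, 0 < lam i + w) :
    log (Gfun lam k d (2 * w)) = logG lam k d w := by
  have hratio : ∀ i, 0 < lam i / (lam i + 2 * w / 2) := fun i => by
    rw [mul_div_cancel_left₀ w two_ne_zero]
    exact div_pos (hlam i) (hw i)
  rw [Gfun, log_prod fun i _ => (mul_pos (rpow_pos_of_pos (hratio i) _) (exp_pos _)).ne']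
  refine Finset.sum_congr rfl fun i _ => ?_
  rw [log_mul (rpow_pos_of_pos (hratio i) _).ne' (exp_pos _).ne', log_rpow (hratio i), log_exp,
    mul_div_cancel_left₀ w two_ne_zero, log_div (hlam i).ne' (hw i).ne']
  field_simp [(hw i).ne']
  ring

theorem hasDerivAt_logG (hw : ∀ i, 0 < lam i + w) :
    HasDerivAt (logG lam k d) (-∑ i, ((poleCoeff (lam i) (k i) (d i)).1 / (lam i + w)
      + (poleCoeff (lam i) (k i) (d i)).2 / (lam i + w) ^ 2)) w := by
  rw [← Finset.sum_neg_distrib]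
  refine HasDerivAt.fun_sum fun i _ => ?_
  have hne := (hw i).ne'
  have hshift : HasDerivAt (fun w => lam i + w) 1 w := (hasDerivAt_id w).const_add _
  have hlog := (((hasDerivAt_log hne).comp w hshift).const_sub (log (lam i))).const_mul
    ((k i : ℝ) / 2)
  have hfrac := (((hasDerivAt_id w).mul_const (d i ^ 2)).mul_const (lam i)).div hshift hne
  refine (hlog.sub hfrac).congr_deriv ?_
  simp only [poleCoeff, id]
  field_simp
  ring

end GaussianGeneratingFunction

/-- two Gaussian generating functions agreeing on a neighborhood
of `0` have identical parameter families `{(λ'_i, k_i, d_i)}`. -/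
theorem normal_params_determined_by_G (N₁ N₂ : ℕ)
    (lam₁ : Fin N₁ → ℝ) (k₁ : Fin N₁ → ℕ) (d₁ : Fin N₁ → ℝ)
    (lam₂ : Fin N₂ → ℝ) (k₂ : Fin N₂ → ℕ) (d₂ : Fin N₂ → ℝ)
    (hlam₁ : ∀ i, 0 < lam₁ i) (hlam₂ : ∀ i, 0 < lam₂ i)
    (hinj₁ : Function.Injective lam₁) (hinj₂ : Function.Injective lam₂)
    (hk₁ : ∀ i, 0 < k₁ i) (hk₂ : ∀ i, 0 < k₂ i)
    (hd₁ : ∀ i, 0 ≤ d₁ i) (hd₂ : ∀ i, 0 ≤ d₂ i)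
    (ε : ℝ) (hε : 0 < ε)
    (heq : ∀ z : ℝ, |z| < ε → Gfun lam₁ k₁ d₁ z = Gfun lam₂ k₂ d₂ z) :
    ∃ σ : Fin N₁ ≃ Fin N₂, ∀ i,
      lam₂ (σ i) = lam₁ i ∧ k₂ (σ i) = k₁ i ∧ d₂ (σ i) = d₁ i := by
  have hsmall : ∀ᶠ w in 𝓝 (0 : ℝ), |2 * w| < ε :=
    ((continuous_abs.comp (continuous_const_mul 2)).tendsto' 0 0 (by simp)).eventually
      (gt_mem_nhds hε)
  have hlog : logG lam₁ k₁ d₁ =ᶠ[𝓝 0] logG lam₂ k₂ d₂ := by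
    filter_upwards [eventually_forall_pos_add hlam₁, eventually_forall_pos_add hlam₂, hsmall]
      with w h₁ h₂ hw
    rw [← log_Gfun_two_mul hlam₁ h₁, ← log_Gfun_two_mul hlam₂ h₂, heq _ hw]
  have hpoles : ∀ᶠ w in 𝓝 (0 : ℝ),
      ∑ i, ((poleCoeff (lam₁ i) (k₁ i) (d₁ i)).1 / (lam₁ i + w)
        + (poleCoeff (lam₁ i) (k₁ i) (d₁ i)).2 / (lam₁ i + w) ^ 2)
      = ∑ j, ((poleCoeff (lam₂ j) (k₂ j) (d₂ j)).1 / (lam₂ j + w)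
        + (poleCoeff (lam₂ j) (k₂ j) (d₂ j)).2 / (lam₂ j + w) ^ 2) := by
    filter_upwards [hlog.deriv, eventually_forall_pos_add hlam₁, eventually_forall_pos_add hlam₂]
      with w hw h₁ h₂
    rwa [(hasDerivAt_logG h₁).deriv, (hasDerivAt_logG h₂).deriv, neg_inj] at hw
  obtain ⟨σ, hσ⟩ := exists_equiv_of_extend_eq hinj₁ hinj₂
    (fun i => poleCoeff_ne_zero (hk₁ i) _) (fun j => poleCoeff_ne_zero (hk₂ j) _)
    (extend_eq_of_eventually_sum_div_add_div_sq_eq hinj₁ hinj₂ hpoles)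
  refine ⟨σ, fun i => ?_⟩
  obtain ⟨hlam, hcoeff⟩ := hσ i
  rw [hlam, poleCoeff_inj (hlam₁ i).ne' (hd₂ _) (hd₁ i)] at hcoeff
  exact ⟨hlam, hcoeff⟩
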